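/- Let A and B be complex N×N matrices. Then the cube of the Lévy distance between the empirical distributions of singular values of A and B is at most (1/N)‖A − B‖²_{HS}: D(L_{√(AA*)}, L_{√(BB*)})³ ≤ (1/N) ‖A−B‖²_{HS}. -/

import Mathlib

/-!
Write `A = U Σ Vᴴ` and `B = X T Yᴴ` with `U, V, X, Y` unitary; the decomposition comes from a
unitary `U` diagonalising `A Aᴴ`, by completing the normalised nonzero columns of `Aᴴ U` to an
orthonormal basis. Then `tr (A Bᴴ) = ∑ σᵢ Pᵢⱼ τⱼ Qⱼᵢ` with `P = Vᴴ Y` and `Q = Xᴴ U` unitary, and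
`|Pᵢⱼ Qⱼᵢ| ≤ tᵢⱼ := (|Pᵢⱼ|² + |Qⱼᵢ|²) / 2`, where `t` is doubly stochastic. Expanding
`‖A - B‖²_HS = ∑ σᵢ² + ∑ τⱼ² - 2 Re tr (A Bᴴ)` gives `‖A - B‖²_HS ≥ ∑ tᵢⱼ (σᵢ - τⱼ)² =: D`.
Coupling the two empirical distributions by `t / N`, Markov's inequality says that mass at most
`D / (N ε²)` moves by more than `ε`, and `ε³ = D / N` balances this against the shift `ε`.
-/

open Matrix

/-- The singular values of a complex `N × N` matrix: the square roots of the eigenvalues of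
`A Aᴴ`. -/
noncomputable def singVals {N : ℕ} (A : Matrix (Fin N) (Fin N) ℂ) : Fin N → ℝ :=
  fun i => Real.sqrt ((Matrix.isHermitian_mul_conjTranspose_self A).eigenvalues i)

/-- The cumulative distribution function of the empirical distribution of the values
`σ 0, …, σ (N-1)`. -/
noncomputable def empCdf {N : ℕ} (σ : Fin N → ℝ) (x : ℝ) : ℝ :=
  ((Finset.univ.filter fun i => σ i < x).card : ℝ) / N

/-- The Lévy distance between two distribution functions. -/
noncomputable def levyDist (F G : ℝ → ℝ) : ℝ :=
  sInf {ε : ℝ | 0 < ε ∧ ∀ x : ℝ, F (x - ε) - ε ≤ G x ∧ G x ≤ F (x + ε) + ε}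

open scoped Finset

namespace Matrix

variable {𝕜 : Type*} [RCLike 𝕜] {m n : Type*} [Fintype m] [Fintype n]

omit [Fintype n] in
theorem conjTranspose_mul_self_apply_self (C : Matrix m n 𝕜) (j : n) :
    (Cᴴ * C) j j = ((∑ k, ‖C k j‖ ^ 2 : ℝ) : 𝕜) := by
  simp [mul_apply, RCLike.conj_mul]

omit [Fintype m] in
theorem mul_conjTranspose_self_apply_self (A : Matrix m n 𝕜) (i : m) :
    (A * Aᴴ) i i = ((∑ j, ‖A i j‖ ^ 2 : ℝ) : 𝕜) := by
  simp [mul_apply, RCLike.mul_conj]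

theorem re_trace_mul_conjTranspose (A : Matrix m n 𝕜) :
    RCLike.re (A * Aᴴ).trace = ∑ i, ∑ j, ‖A i j‖ ^ 2 := by
  simp only [trace, diag_apply, mul_conjTranspose_self_apply_self, map_sum, RCLike.ofReal_re]

theorem sum_norm_sub_sq_apply (A B : Matrix m n 𝕜) :
    ∑ i, ∑ j, ‖A i j - B i j‖ ^ 2 =
      ∑ i, ∑ j, ‖A i j‖ ^ 2 + ∑ i, ∑ j, ‖B i j‖ ^ 2 - 2 * RCLike.re (A * Bᴴ).trace := by
  have hBA : (B * Aᴴ).trace = star (A * Bᴴ).trace := by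
    rw [← trace_conjTranspose, conjTranspose_mul, conjTranspose_conjTranspose]
  simp only [← re_trace_mul_conjTranspose, ← sub_apply]
  rw [conjTranspose_sub, Matrix.sub_mul, Matrix.mul_sub, Matrix.mul_sub, trace_sub, trace_sub, trace_sub, hBA]
  simp only [map_sub, RCLike.star_def, RCLike.conj_re]
  ring

theorem trace_mul_conjTranspose_mul_mul_conjTranspose (U D V X E Y : Matrix n n 𝕜) :
    ((U * D * Vᴴ) * (X * E * Yᴴ)ᴴ).trace = (D * (Vᴴ * Y) * Eᴴ * (Xᴴ * U)).trace := by
  simp only [conjTranspose_mul, conjTranspose_conjTranspose, mul_assoc]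
  rw [trace_mul_comm U]
  simp only [mul_assoc]

variable [DecidableEq n]

theorem trace_diagonal_mul_mul_diagonal_mul {R : Type*} [CommSemiring R] (a b : n → R)
    (P Q : Matrix n n R) :
    (diagonal a * P * diagonal b * Q).trace = ∑ i, ∑ j, a i * P i j * b j * Q j i := by
  simp only [trace, diag_apply, mul_apply (M := diagonal a * P * diagonal b), mul_diagonal,
    diagonal_mul]

omit [Fintype m] [Fintype n] in
theorem conjTranspose_diagonal_ofReal (σ : n → ℝ) :
    (diagonal fun i => (σ i : 𝕜))ᴴ = diagonal fun i => (σ i : 𝕜) := by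
  rw [diagonal_conjTranspose]
  congr
  ext i
  simp

theorem exists_mem_unitaryGroup_eq_mul_diagonal_sqrt {C : Matrix n n 𝕜} {d : n → ℝ}
    (h : Cᴴ * C = diagonal fun j => (d j : 𝕜)) :
    ∃ V ∈ unitaryGroup n 𝕜, C = V * diagonal fun j => ((√(d j) : ℝ) : 𝕜) := by
  have hd (j : n) : d j = ∑ k, ‖C k j‖ ^ 2 := by
    have := congrFun (congrFun h j) j
    rw [conjTranspose_mul_self_apply_self, diagonal_apply_eq] at this
    exact_mod_cast this.symm
  have hd0 (j : n) : 0 ≤ d j := by rw [hd]; positivity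
  have hsqrt {j : n} (hj : d j ≠ 0) : ((√(d j) : ℝ) : 𝕜) ≠ 0 :=
    RCLike.ofReal_ne_zero.mpr ((Real.sqrt_ne_zero (hd0 j)).mpr hj)
  have hcol {j : n} (hj : d j = 0) (k : n) : C k j = 0 := by
    rw [hd, Finset.sum_eq_zero_iff_of_nonneg fun _ _ => by positivity] at hj
    simpa using hj k (Finset.mem_univ k)
  let v (j : n) : EuclideanSpace 𝕜 n := ((√(d j))⁻¹ : 𝕜) • WithLp.toLp 2 fun k => C k j
  have hv : Orthonormal 𝕜 (({j | d j ≠ 0} : Set n).domRestrict v) := by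
    rw [orthonormal_iff_ite]
    rintro ⟨i, hi⟩ ⟨j, hj⟩
    have hdot : (fun k => C k j) ⬝ᵥ star (fun k => C k i) = (Cᴴ * C) i j := by
      simp [dotProduct, mul_apply, mul_comm]
    simp only [v, Set.domRestrict_apply, inner_smul_left, inner_smul_right,
      EuclideanSpace.inner_toLp_toLp, hdot, h, diagonal_apply, Subtype.mk.injEq, map_inv₀,
      RCLike.conj_ofReal]
    split_ifs with hij
    · subst hij
      have := hsqrt hi
      have hdi : ((d i : ℝ) : 𝕜) = √(d i) * √(d i) := by
        exact_mod_cast (Real.mul_self_sqrt (hd0 i)).symm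
      rw [hdi]
      field_simp
    · simp
  obtain ⟨b, hb⟩ := hv.exists_orthonormalBasis_extension_of_card_eq (by simp)
  refine ⟨_, (EuclideanSpace.basisFun n 𝕜).toMatrix_orthonormalBasis_mem_unitary b, ?_⟩
  ext k j
  simp only [mul_diagonal, Module.Basis.toMatrix_apply]
  by_cases hj : d j = 0
  · simp [hj, hcol hj]
  · have := hsqrt hj
    rw [hb j hj]
    simp only [v, map_smul, Finsupp.coe_smul, Pi.smul_apply,
      OrthonormalBasis.coe_toBasis_repr_apply, EuclideanSpace.basisFun_repr, smul_eq_mul]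
    field_simp

theorem exists_eq_unitary_mul_diagonal_mul_conjTranspose (A : Matrix n n 𝕜) :
    ∃ U ∈ unitaryGroup n 𝕜, ∃ V ∈ unitaryGroup n 𝕜, A = U * diagonal
      (fun i => ((√((isHermitian_mul_conjTranspose_self A).eigenvalues i) : ℝ) : 𝕜)) * Vᴴ := by
  set hA := isHermitian_mul_conjTranspose_self A
  set U : Matrix n n 𝕜 := (hA.eigenvectorUnitary : Matrix n n 𝕜) with hU
  have hdiag : (Aᴴ * U)ᴴ * (Aᴴ * U) = diagonal fun i => (hA.eigenvalues i : 𝕜) := by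
    have := hA.conjStarAlgAut_star_eigenvectorUnitary
    rw [Unitary.conjStarAlgAut_apply, Unitary.coe_star, star_star, ← hU] at this
    rw [conjTranspose_mul, conjTranspose_conjTranspose, ← star_eq_conjTranspose]
    simpa only [mul_assoc, Function.comp_def] using this
  obtain ⟨V, hV, hAU⟩ := exists_mem_unitaryGroup_eq_mul_diagonal_sqrt hdiag
  refine ⟨U, hA.eigenvectorUnitary.2, V, hV, ?_⟩
  calc A = U * (Aᴴ * U)ᴴ := by
        rw [conjTranspose_mul, conjTranspose_conjTranspose, ← mul_assoc,
          ← star_eq_conjTranspose, mem_unitaryGroup_iff.mp hA.eigenvectorUnitary.2, one_mul]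
    _ = _ := by rw [hAU, conjTranspose_mul, conjTranspose_diagonal_ofReal, mul_assoc]

theorem norm_sq_apply_mem_doublyStochastic {U : Matrix n n 𝕜} (hU : U ∈ unitaryGroup n 𝕜) :
    (of fun i j => ‖U i j‖ ^ 2) ∈ doublyStochastic ℝ n := by
  rw [mem_doublyStochastic_iff_sum]
  refine ⟨fun i j => sq_nonneg ‖U i j‖, fun i => ?_, fun j => ?_⟩
  · have h := congrFun (congrFun (mem_unitaryGroup_iff.mp hU) i) i
    rw [star_eq_conjTranspose, mul_conjTranspose_self_apply_self, one_apply_eq] at h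
    exact_mod_cast h
  · have h := congrFun (congrFun (mem_unitaryGroup_iff'.mp hU) j) j
    rw [star_eq_conjTranspose, conjTranspose_mul_self_apply_self, one_apply_eq] at h
    exact_mod_cast h

theorem sum_norm_sq_apply_of_eq_mul_diagonal_mul {A U V : Matrix n n 𝕜} {σ : n → ℝ}
    (hU : U ∈ unitaryGroup n 𝕜) (hV : V ∈ unitaryGroup n 𝕜)
    (hA : A = U * diagonal (fun i => (σ i : 𝕜)) * Vᴴ) :
    ∑ i, ∑ j, ‖A i j‖ ^ 2 = ∑ i, σ i ^ 2 := by
  have hU' : Uᴴ * U = 1 := mem_unitaryGroup_iff'.mp hU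
  have hV' : Vᴴ * V = 1 := mem_unitaryGroup_iff'.mp hV
  rw [← re_trace_mul_conjTranspose, hA, trace_mul_conjTranspose_mul_mul_conjTranspose, hU', hV',
    mul_one, mul_one, conjTranspose_diagonal_ofReal, diagonal_mul_diagonal, trace_diagonal]
  simp [sq]

theorem re_trace_diagonal_mul_mul_diagonal_mul_le {σ τ : n → ℝ} (hσ : ∀ i, 0 ≤ σ i)
    (hτ : ∀ j, 0 ≤ τ j) (P Q : Matrix n n 𝕜) :
    RCLike.re (diagonal (fun i => (σ i : 𝕜)) * P * diagonal (fun j => (τ j : 𝕜)) * Q).trace ≤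
      ∑ i, ∑ j, (2⁻¹ * ‖P i j‖ ^ 2 + 2⁻¹ * ‖Q j i‖ ^ 2) * (σ i * τ j) := by
  rw [trace_diagonal_mul_mul_diagonal_mul]
  simp only [map_sum]
  gcongr with i _ j _
  calc RCLike.re ((σ i : 𝕜) * P i j * τ j * Q j i)
      ≤ ‖(σ i : 𝕜) * P i j * τ j * Q j i‖ := RCLike.re_le_norm _
    _ = (‖P i j‖ * ‖Q j i‖) * (σ i * τ j) := by
        simp only [norm_mul, RCLike.norm_ofReal, abs_of_nonneg (hσ i), abs_of_nonneg (hτ j)]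
        ring
    _ ≤ _ := by
        gcongr
        · exact mul_nonneg (hσ i) (hτ j)
        · nlinarith [two_mul_le_add_sq ‖P i j‖ ‖Q j i‖]

theorem sum_sum_mul_sub_sq_of_mem_doublyStochastic {t : Matrix n n ℝ}
    (ht : t ∈ doublyStochastic ℝ n) (a b : n → ℝ) :
    ∑ i, ∑ j, t i j * (a i - b j) ^ 2 =
      ∑ i, a i ^ 2 + ∑ j, b j ^ 2 - 2 * ∑ i, ∑ j, t i j * (a i * b j) := by
  have hrow (i : n) : ∑ j, t i j * a i ^ 2 = a i ^ 2 := by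
    rw [← Finset.sum_mul, sum_row_of_mem_doublyStochastic ht, one_mul]
  have hcol (j : n) : ∑ i, t i j * b j ^ 2 = b j ^ 2 := by
    rw [← Finset.sum_mul, sum_col_of_mem_doublyStochastic ht, one_mul]
  calc ∑ i, ∑ j, t i j * (a i - b j) ^ 2
      = ∑ i, ∑ j, t i j * a i ^ 2 + ∑ i, ∑ j, t i j * b j ^ 2
          - 2 * ∑ i, ∑ j, t i j * (a i * b j) := by
        simp only [Finset.mul_sum, ← Finset.sum_add_distrib, ← Finset.sum_sub_distrib]
        congr! 2
        ring
    _ = _ := by rw [Finset.sum_comm (f := fun i j => t i j * b j ^ 2)]; simp only [hrow, hcol]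

theorem exists_mem_doublyStochastic_sum_mul_sub_sq_le {A B U V X Y : Matrix n n 𝕜}
    {σ τ : n → ℝ} (hσ : ∀ i, 0 ≤ σ i) (hτ : ∀ j, 0 ≤ τ j)
    (hU : U ∈ unitaryGroup n 𝕜) (hV : V ∈ unitaryGroup n 𝕜)
    (hX : X ∈ unitaryGroup n 𝕜) (hY : Y ∈ unitaryGroup n 𝕜)
    (hA : A = U * diagonal (fun i => (σ i : 𝕜)) * Vᴴ)
    (hB : B = X * diagonal (fun j => (τ j : 𝕜)) * Yᴴ) :
    ∃ t ∈ doublyStochastic ℝ n,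
      ∑ i, ∑ j, t i j * (σ i - τ j) ^ 2 ≤ ∑ i, ∑ j, ‖A i j - B i j‖ ^ 2 := by
  set P := Vᴴ * Y
  set Q := Xᴴ * U
  have hP : P ∈ unitaryGroup n 𝕜 := mul_mem (Unitary.star_mem hV) hY
  have hQ : Q ∈ unitaryGroup n 𝕜 := mul_mem (Unitary.star_mem hX) hU
  set t : Matrix n n ℝ := of fun i j => 2⁻¹ * ‖P i j‖ ^ 2 + 2⁻¹ * ‖Q j i‖ ^ 2
  have ht : t ∈ doublyStochastic ℝ n := by
    have : t = (2⁻¹ : ℝ) • of (fun i j => ‖P i j‖ ^ 2) +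
        (2⁻¹ : ℝ) • (of fun i j => ‖Q i j‖ ^ 2)ᵀ := by
      ext i j
      simp [t]
    rw [this]
    exact convex_doublyStochastic (norm_sq_apply_mem_doublyStochastic hP)
      (transpose_mem_doublyStochastic_iff.mpr (norm_sq_apply_mem_doublyStochastic hQ))
      (by norm_num) (by norm_num) (by norm_num)
  have hcross : RCLike.re (A * Bᴴ).trace ≤ ∑ i, ∑ j, t i j * (σ i * τ j) := by
    rw [hA, hB, trace_mul_conjTranspose_mul_mul_conjTranspose, conjTranspose_diagonal_ofReal]
    exact re_trace_diagonal_mul_mul_diagonal_mul_le hσ hτ P Q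
  refine ⟨t, ht, ?_⟩
  rw [sum_sum_mul_sub_sq_of_mem_doublyStochastic ht, sum_norm_sub_sq_apply,
    sum_norm_sq_apply_of_eq_mul_diagonal_mul hU hV hA,
    sum_norm_sq_apply_of_eq_mul_diagonal_mul hX hY hB]
  linarith

end Matrix

theorem levyDist_nonneg (F G : ℝ → ℝ) : 0 ≤ levyDist F G :=
  Real.sInf_nonneg fun _ hε => hε.1.le

theorem levyDist_le {F G : ℝ → ℝ} {ε : ℝ} (hε : 0 < ε)
    (h : ∀ x, F (x - ε) - ε ≤ G x ∧ G x ≤ F (x + ε) + ε) : levyDist F G ≤ ε :=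
  csInf_le ⟨0, fun _ hδ => hδ.1.le⟩ ⟨hε, h⟩

section

variable {n : Type*} [Fintype n] [DecidableEq n] {t : Matrix n n ℝ}

theorem sq_mul_card_filter_sub_card_filter_le (ht : t ∈ doublyStochastic ℝ n) (a b : n → ℝ)
    {ε : ℝ} (hε : 0 ≤ ε) (x : ℝ) :
    ε ^ 2 * ((#{i | a i < x - ε} : ℝ) - #{j | b j < x}) ≤ ∑ i, ∑ j, t i j * (a i - b j) ^ 2 := by
  set S : Finset n := {i | a i < x - ε}
  set T : Finset n := {j | b j < x}
  have hS : (#S : ℝ) = ∑ i ∈ S, ∑ j ∈ T, t i j + ∑ i ∈ S, ∑ j ∈ Tᶜ, t i j := by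
    simp [← Finset.sum_add_distrib, Finset.sum_add_sum_compl, sum_row_of_mem_doublyStochastic ht]
  have hST : ∑ i ∈ S, ∑ j ∈ T, t i j ≤ #T := by
    calc ∑ i ∈ S, ∑ j ∈ T, t i j = ∑ j ∈ T, ∑ i ∈ S, t i j := Finset.sum_comm
      _ ≤ ∑ j ∈ T, ∑ i, t i j := by
          gcongr with j
          exacts [fun _ _ _ => nonneg_of_mem_doublyStochastic ht, Finset.subset_univ S]
      _ = #T := by simp [sum_col_of_mem_doublyStochastic ht]
  have hSTc : ε ^ 2 * ∑ i ∈ S, ∑ j ∈ Tᶜ, t i j ≤ ∑ i ∈ S, ∑ j ∈ Tᶜ, t i j * (a i - b j) ^ 2 := by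
    simp only [Finset.mul_sum]
    refine Finset.sum_le_sum fun i hi => Finset.sum_le_sum fun j hj => ?_
    simp only [S, T, Finset.mem_filter, Finset.mem_univ, true_and, Finset.mem_compl,
      not_lt] at hi hj
    have hgap : ε ^ 2 ≤ (a i - b j) ^ 2 := by
      rw [sub_sq_comm]
      exact pow_le_pow_left₀ hε (by linarith) 2
    rw [mul_comm]
    exact mul_le_mul_of_nonneg_left hgap (nonneg_of_mem_doublyStochastic ht)
  have hsub : ∑ i ∈ S, ∑ j ∈ Tᶜ, t i j * (a i - b j) ^ 2 ≤ ∑ i, ∑ j, t i j * (a i - b j) ^ 2 := by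
    have hf (i j : n) : 0 ≤ t i j * (a i - b j) ^ 2 :=
      mul_nonneg (nonneg_of_mem_doublyStochastic ht) (sq_nonneg _)
    calc ∑ i ∈ S, ∑ j ∈ Tᶜ, t i j * (a i - b j) ^ 2 ≤ ∑ i ∈ S, ∑ j, t i j * (a i - b j) ^ 2 :=
          Finset.sum_le_sum fun i _ => Finset.sum_le_sum_of_subset_of_nonneg
            (Finset.subset_univ _) fun j _ _ => hf i j
      _ ≤ _ := Finset.sum_le_sum_of_subset_of_nonneg (Finset.subset_univ _)
            fun i _ _ => Finset.sum_nonneg fun j _ => hf i j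
  calc ε ^ 2 * ((#S : ℝ) - #T) ≤ ε ^ 2 * ∑ i ∈ S, ∑ j ∈ Tᶜ, t i j := by gcongr; linarith
    _ ≤ _ := hSTc.trans hsub

end

section

variable {N : ℕ} {t : Matrix (Fin N) (Fin N) ℝ}

theorem empCdf_sub_le_of_mem_doublyStochastic (ht : t ∈ doublyStochastic ℝ (Fin N))
    (a b : Fin N → ℝ) {ε : ℝ} (hε : 0 < ε)
    (hD : (∑ i, ∑ j, t i j * (a i - b j) ^ 2) / N ≤ ε ^ 3) (x : ℝ) :
    empCdf a (x - ε) - ε ≤ empCdf b x := by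
  have hcount := sq_mul_card_filter_sub_card_filter_le ht a b hε.le x
  suffices h : ((#{i | a i < x - ε} : ℝ) - #{j | b j < x}) / N ≤ ε by
    rw [sub_div] at h
    simp only [empCdf]
    linarith
  calc ((#{i | a i < x - ε} : ℝ) - #{j | b j < x}) / N
      = ε ^ 2 * ((#{i | a i < x - ε} : ℝ) - #{j | b j < x}) / N / ε ^ 2 := by
        field_simp
    _ ≤ (∑ i, ∑ j, t i j * (a i - b j) ^ 2) / N / ε ^ 2 := by gcongr
    _ ≤ ε ^ 3 / ε ^ 2 := by gcongr
    _ = ε := by field_simp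

theorem levyDist_empCdf_pow_three_le (ht : t ∈ doublyStochastic ℝ (Fin N)) (a b : Fin N → ℝ) :
    levyDist (empCdf a) (empCdf b) ^ 3 ≤ 1 / N * ∑ i, ∑ j, t i j * (a i - b j) ^ 2 := by
  set D := ∑ i, ∑ j, t i j * (a i - b j) ^ 2
  have hDt : ∑ i, ∑ j, tᵀ i j * (b i - a j) ^ 2 = D := by
    rw [Finset.sum_comm]
    simp only [transpose_apply, sub_sq_comm (b _)]
    rfl
  have hD : 0 ≤ D / N := div_nonneg (Finset.sum_nonneg fun i _ => Finset.sum_nonneg fun j _ =>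
    mul_nonneg (nonneg_of_mem_doublyStochastic ht) (sq_nonneg _)) N.cast_nonneg
  set c := (D / N) ^ ((3 : ℕ) : ℝ)⁻¹
  have hc : c ^ 3 = D / N := Real.rpow_inv_natCast_pow hD three_ne_zero
  have hc0 : 0 ≤ c := Real.rpow_nonneg hD _
  have hle : levyDist (empCdf a) (empCdf b) ≤ c := by
    refine le_of_forall_gt_imp_ge_of_dense fun ε hε => levyDist_le (hc0.trans_lt hε) fun x => ?_
    have hDε : D / N ≤ ε ^ 3 := hc ▸ pow_le_pow_left₀ hc0 hε.le 3
    refine ⟨empCdf_sub_le_of_mem_doublyStochastic ht a b (hc0.trans_lt hε) hDε x, ?_⟩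
    have := empCdf_sub_le_of_mem_doublyStochastic (transpose_mem_doublyStochastic_iff.mpr ht) b a
      (hc0.trans_lt hε) (hDt ▸ hDε) (x + ε)
    rwa [add_sub_cancel_right, sub_le_iff_le_add] at this
  calc levyDist (empCdf a) (empCdf b) ^ 3 ≤ c ^ 3 := by gcongr; exact levyDist_nonneg _ _
    _ = 1 / N * D := by rw [hc, one_div_mul_eq_div]

end

theorem levy_dist_singular_values_cubed_le_general
    (N : ℕ) (A B : Matrix (Fin N) (Fin N) ℂ) :
    (levyDist (empCdf (singVals A)) (empCdf (singVals B))) ^ 3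
      ≤ (1 / (N : ℝ)) * ∑ i, ∑ j, ‖A i j - B i j‖ ^ 2 := by
  obtain ⟨U, hU, V, hV, hA⟩ := exists_eq_unitary_mul_diagonal_mul_conjTranspose A
  obtain ⟨X, hX, Y, hY, hB⟩ := exists_eq_unitary_mul_diagonal_mul_conjTranspose B
  obtain ⟨t, ht, hle⟩ := exists_mem_doublyStochastic_sum_mul_sub_sq_le (σ := singVals A)
    (τ := singVals B) (fun _ => Real.sqrt_nonneg _) (fun _ => Real.sqrt_nonneg _) hU hV hX hY hA hB
  calc _ ≤ 1 / (N : ℝ) * ∑ i, ∑ j, t i j * (singVals A i - singVals B j) ^ 2 :=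
        levyDist_empCdf_pow_three_le ht _ _
    _ ≤ _ := by gcongr

/-- Hoffman–Wielandt-type bound: for complex `N × N` matrices `A` and `B`, the cube of the Lévy
distance between the empirical distributions of the singular values of `A` and of `B` is at most
`(1/N) ‖A − B‖²_{HS}`. -/
theorem levy_dist_singular_values_cubed_le
    (N : ℕ) (hN : 0 < N) (A B : Matrix (Fin N) (Fin N) ℂ) :
    (levyDist (empCdf (singVals A)) (empCdf (singVals B))) ^ 3
      ≤ (1 / (N : ℝ)) * ∑ i, ∑ j, ‖A i j - B i j‖ ^ 2 :=
  levy_dist_singular_values_cubed_le_general N A B
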